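/- arXiv:2112.06491 — 2 statements merged into one kernel-verified Lean document; each statement's English description precedes it below -/
import Mathlib

section
/- Let F be a field and k = F((t)) with ring of integers O = F[[t]]. The residue pairing O × (Ω¹_k / Ω¹_O) → F, (f, ω) ↦ Res(f ω), is nondegenerate: if f ∈ O satisfies Res(f ω) = 0 for all ω ∈ Ω¹_k, then f = 0; and if ω ∈ Ω¹_k satisfies Res(f ω) = 0 for all f ∈ O, then ω ∈ Ω¹_O (i.e. ω has no polar part). -/
/-! Pairing with `t⁻¹⁻ⁿ dt` reads off the `n`-th coefficient of `f`, and pairing with `tᵐ` reads off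
the coefficient of `t⁻¹⁻ᵐ` in `g`; so both kernels of the residue pairing are trivial. -/

open HahnSeries PowerSeries

section Residue

variable {R : Type*} [Semiring R]

theorem coeff_neg_one_ofPowerSeries_mul_single (f : R⟦X⟧) (n : ℕ) :
    (ofPowerSeries ℤ R f * single (-1 - (n : ℤ)) 1).coeff (-1) = coeff n f := by
  have h := coeff_mul_single_add (r := (1 : R)) (x := ofPowerSeries ℤ R f)
    (a := (n : ℤ)) (b := -1 - (n : ℤ))
  rwa [add_sub_cancel, mul_one, ofPowerSeries_apply_coeff] at h

theorem coeff_neg_one_ofPowerSeries_X_pow_mul (g : LaurentSeries R) (m : ℕ) :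
    (ofPowerSeries ℤ R (X ^ m) * g).coeff (-1) = g.coeff (-1 - m) := by
  have h := coeff_single_mul_add (r := (1 : R)) (x := g) (a := -1 - (m : ℤ)) (b := (m : ℤ))
  rwa [sub_add_cancel, one_mul, ← ofPowerSeries_X_pow] at h

end Residue

theorem LaurentSeries.exists_eq_ofPowerSeries_of_coeff_neg {R : Type*} [Ring R]
    (g : LaurentSeries R) (hg : ∀ i < 0, g.coeff i = 0) :
    ∃ h : R⟦X⟧, g = ofPowerSeries ℤ R h := by
  refine ⟨mk fun n ↦ g.coeff n, ?_⟩
  ext i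
  rw [coeff_coe]
  split_ifs with hi
  · exact hg i hi
  · rw [coeff_mk, Int.natAbs_of_nonneg (not_lt.mp hi)]

theorem statement_3 (F : Type) [Field F] :
    (∀ f : PowerSeries F,
        (∀ g : LaurentSeries F, ((HahnSeries.ofPowerSeries ℤ F f) * g).coeff (-1) = 0) →
        f = 0)
      ∧ (∀ g : LaurentSeries F,
          (∀ f : PowerSeries F, ((HahnSeries.ofPowerSeries ℤ F f) * g).coeff (-1) = 0) →
          ∃ h : PowerSeries F, g = HahnSeries.ofPowerSeries ℤ F h) := by
  refine ⟨fun f hf ↦ ?_, fun g hg ↦ ?_⟩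
  · ext n
    rw [← coeff_neg_one_ofPowerSeries_mul_single, hf, map_zero]
  · refine LaurentSeries.exists_eq_ofPowerSeries_of_coeff_neg g fun i hi ↦ ?_
    obtain ⟨m, rfl⟩ : ∃ m : ℕ, i = -1 - m := ⟨(-1 - i).toNat, by omega⟩
    rw [← coeff_neg_one_ofPowerSeries_X_pow_mul, hg]
end

section
/- Let K be a henselian discrete valuation field of characteristic 0 containing a primitive p-th root of unity ζ_p, with residue field k of characteristic p, prime element π, and f_K = p·v(p)/(p−1). For x in the valuation ring with reduction x̄ ∈ k, the class of the unit 1 + x·(ζ_p − 1)^p in K×/(K×)^p is trivial if and only if x̄ lies in ℘(k) = {a^p − a : a ∈ k}. Consequently x̄ ↦ [1 + x̃(ζ_p−1)^p] induces an injective homomorphism k/℘k → K×/(K×)^p whose image equals the image of the units 1 + 𝔪_K^{f_K} in K×/(K×)^p. -/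
/-!
Put `l = ζ - 1`. Expanding `(1 + l)^p = 1` gives `p = l^(p-1) w` with `w ≡ -1 mod 𝔪`, hence
`(1 + l T)^p = 1 + l^p H(T)` for a monic `H ∈ A[T]` reducing to the Artin–Schreier polynomial
`T^p - T` modulo `𝔪`. If `x̄ = a^p - a`, Hensel's lemma gives `t` with `H(t) = x`, so
`1 + x l^p = (1 + l t)^p`. Conversely a `p`-th root `y` of `1 + x l^p` lies in `A`, and
`l ∣ y - 1`: otherwise `l = (y - 1) d` with `d ∈ 𝔪`, and `(y - 1)^p` would dominate the other
terms of `y^p - 1 = x l^p`. Then `x = H(t)` and `x̄ = t̄^p - t̄`.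
The quotient `(1 + a l^p)(1 + b l^p) / (1 + (a + b) l^p)` is `1 + s l^p` with `s ∈ 𝔪`, whence
the homomorphism property; and `l^p` generates `𝔪^f`, which identifies the image.
-/

open Polynomial IsLocalRing

theorem sum_Ioo_zero_pow_mul_choose_div_eq_one {R : Type*} [CommSemiring R] {p : ℕ}
    [Fact p.Prime] :
    ∑ k ∈ Finset.Ioo 0 p, (0 : R) ^ (k - 1) * ((p.choose k / p : ℕ) : R) = 1 := by
  have hp : p.Prime := Fact.out
  rw [Finset.sum_eq_single_of_mem 1 (Finset.mem_Ioo.mpr ⟨one_pos, hp.one_lt⟩)]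
  · simp [Nat.div_self hp.pos]
  · intro k hk hk1
    simp only [Finset.mem_Ioo] at hk
    simp [show k - 1 ≠ 0 by omega]

section KummerArtinSchreierPoly

variable {R : Type*} [CommRing R] {p : ℕ} [Fact p.Prime]

noncomputable def kummerArtinSchreierPoly (p : ℕ) (l w : R) : R[X] :=
  X ^ p + C w * X * ∑ k ∈ Finset.Ioo 0 p, (C l * X) ^ (k - 1) * ((p.choose k / p : ℕ) : R[X])

theorem one_add_C_mul_X_pow_eq {l w : R} (h : (p : R) = l ^ (p - 1) * w) :
    (1 + C l * X) ^ p = 1 + C (l ^ p) * kummerArtinSchreierPoly p l w := by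
  have hp : p.Prime := Fact.out
  have hpC : (p : R[X]) = C (l ^ (p - 1)) * C w := by rw [← map_natCast C, h, C_mul]
  have hlp : C (l ^ p) = C (l ^ (p - 1)) * C l := by rw [← C_mul, pow_sub_one_mul hp.ne_zero]
  rw [add_comm, add_pow_prime_eq hp, kummerArtinSchreierPoly, hpC, hlp, mul_pow, ← C_pow, hlp]
  simp only [one_pow, mul_one]
  ring

theorem monic_kummerArtinSchreierPoly_sub_C (l w x : R) :
    (kummerArtinSchreierPoly p l w - C x).Monic := by
  have hp : p.Prime := Fact.out
  have hlin (a : R) : (C a * X).natDegree ≤ 1 := (natDegree_C_mul_le _ _).trans natDegree_X_le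
  have hsum :
      (∑ k ∈ Finset.Ioo 0 p, (C l * X) ^ (k - 1) * ((p.choose k / p : ℕ) : R[X])).natDegree
        ≤ p - 2 := by
    refine natDegree_sum_le_of_forall_le _ _ fun k hk => ?_
    simp only [Finset.mem_Ioo] at hk
    refine natDegree_mul_le.trans ?_
    rw [natDegree_natCast, add_zero]
    exact (natDegree_pow_le_of_le _ (hlin l)).trans (by omega)
  rw [kummerArtinSchreierPoly, add_sub_assoc]
  refine monic_X_pow_add ((degree_sub_le _ _).trans_lt (max_lt ?_ ?_))
  · refine degree_le_natDegree.trans_lt ?_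
    have := natDegree_mul_le.trans (add_le_add (hlin w) hsum)
    exact_mod_cast this.trans_lt (by have := hp.two_le; omega)
  · exact degree_C_le.trans_lt (by exact_mod_cast hp.pos)

theorem map_kummerArtinSchreierPoly {S : Type*} [CommRing S] (f : R →+* S) {l w : R}
    (hl : f l = 0) (hw : f w = -1) : (kummerArtinSchreierPoly p l w).map f = X ^ p - X := by
  simp [kummerArtinSchreierPoly, Polynomial.map_sum, hl, hw,
    sum_Ioo_zero_pow_mul_choose_div_eq_one]
  ring

end KummerArtinSchreierPoly

section LocalRing

variable {A : Type*} [CommRing A] {p : ℕ} [Fact p.Prime]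

theorem residue_sub_one_eq_zero_of_pow_eq_one [IsLocalRing A] [CharP (ResidueField A) p]
    {ζ : A} (hζ : ζ ^ p = 1) : residue A (ζ - 1) = 0 := by
  have : residue A ζ = 1 :=
    frobenius_inj (ResidueField A) p (by rw [frobenius_def, ← map_pow, hζ, map_one, map_one])
  rw [map_sub, this, map_one, sub_self]

theorem isUnit_one_add_mul_pow [IsLocalRing A] {l : A} (hl : residue A l = 0) (x : A) :
    IsUnit (1 + x * l ^ p) :=
  (residue_ne_zero_iff_isUnit _).mp (by simp [hl, (Fact.out : p.Prime).ne_zero])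

theorem IsPrimitiveRoot.exists_natCast_eq_sub_one_pow_mul [IsDomain A] [IsLocalRing A]
    [CharP (ResidueField A) p] {ζ : A} (hζ : IsPrimitiveRoot ζ p) :
    ∃ w, (p : A) = (ζ - 1) ^ (p - 1) * w ∧ residue A w = -1 := by
  have hp : p.Prime := Fact.out
  have hl : residue A (ζ - 1) = 0 := residue_sub_one_eq_zero_of_pow_eq_one hζ.pow_eq_one
  have hl0 : ζ - 1 ≠ 0 := sub_ne_zero.mpr (hζ.ne_one hp.one_lt)
  set S := ∑ k ∈ Finset.Ioo 0 p, (ζ - 1) ^ (k - 1) * ((p.choose k / p : ℕ) : A)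
  have hS : residue A S = 1 := by
    simp only [S, map_sum, map_mul, map_pow, map_natCast, hl,
      sum_Ioo_zero_pow_mul_choose_div_eq_one]
  have hSu : IsUnit S := (residue_ne_zero_iff_isUnit S).mp (by simp [hS])
  have hbinom := add_pow_prime_eq hp (ζ - 1) 1
  simp only [sub_add_cancel, hζ.pow_eq_one, one_pow, mul_one] at hbinom
  have key : (ζ - 1) * ((ζ - 1) ^ (p - 1) + p * S) = 0 := by
    rw [mul_add, mul_comm, pow_sub_one_mul hp.ne_zero]
    linear_combination -hbinom
  have hinv : S * ↑hSu.unit⁻¹ = 1 := hSu.mul_val_inv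
  refine ⟨-↑hSu.unit⁻¹, ?_, ?_⟩
  · linear_combination (↑hSu.unit⁻¹ : A) * (mul_eq_zero.mp key).resolve_left hl0 - p * hinv
  · have := congrArg (residue A) hinv
    rw [map_mul, hS, one_mul, map_one] at this
    rw [map_neg, this]

variable [HenselianLocalRing A] [CharP (ResidueField A) p] {l w : A}

theorem exists_one_add_mul_pow_eq_pow (h : (p : A) = l ^ (p - 1) * w)
    (hl : residue A l = 0) (hw : residue A w = -1) {x : A} {a : ResidueField A}
    (ha : residue A x = a ^ p - a) : ∃ y : A, 1 + x * l ^ p = y ^ p := by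
  have hmap := map_kummerArtinSchreierPoly (p := p) (residue A) hl hw
  have hroot : aeval a (kummerArtinSchreierPoly p l w - C x) = 0 := by
    simp [aeval_def, eval₂_eq_eval_map, hmap, ha]
  have hsimple : aeval a (derivative (kummerArtinSchreierPoly p l w - C x)) ≠ 0 := by
    simp [aeval_def, eval₂_eq_eval_map, ← derivative_map, hmap, derivative_X_pow]
  have hlift := (HenselianLocalRing.TFAE A).out 0 1
  obtain ⟨t, ht, -⟩ :=
    hlift.mp ‹_› _ (monic_kummerArtinSchreierPoly_sub_C l w x) a hroot hsimple
  rw [IsRoot, eval_sub, eval_C, sub_eq_zero] at ht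
  have hpow := congrArg (eval t) (one_add_C_mul_X_pow_eq h)
  simp only [eval_pow, eval_add, eval_one, eval_mul, eval_C, eval_X, ht] at hpow
  exact ⟨1 + l * t, by linear_combination -hpow⟩

theorem exists_one_add_mul_pow_mul_eq (h : (p : A) = l ^ (p - 1) * w)
    (hl : residue A l = 0) (hw : residue A w = -1) (a b : A) :
    ∃ z : A, (1 + a * l ^ p) * (1 + b * l ^ p) = (1 + (a + b) * l ^ p) * z ^ p := by
  have hp : p.Prime := Fact.out
  obtain ⟨u, hu⟩ := isUnit_one_add_mul_pow (p := p) hl (a + b)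
  obtain ⟨z, hz⟩ :=
    exists_one_add_mul_pow_eq_pow h hl hw (x := a * b * l ^ p * ↑u⁻¹) (a := 0)
      (by simp [hl, hp.ne_zero])
  exact ⟨z, by linear_combination (u : A) * hz - a * b * l ^ p * l ^ p * u.mul_inv
    + (z ^ p - 1) * hu⟩

end LocalRing

theorem exists_algebraMap_eq_pow_iff {A K : Type*} [CommRing A] [IsDomain A]
    [IsIntegrallyClosed A] [Field K] [Algebra A K] [IsFractionRing A K] {n : ℕ} (hn : n ≠ 0)
    (a : A) : (∃ y : K, algebraMap A K a = y ^ n) ↔ ∃ y : A, a = y ^ n := by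
  constructor
  · rintro ⟨y, hy⟩
    obtain ⟨z, rfl⟩ := IsIntegrallyClosed.exists_algebraMap_eq_of_isIntegral_pow (R := A)
      (Nat.pos_of_ne_zero hn) (hy ▸ isIntegral_algebraMap)
    exact ⟨z, IsFractionRing.injective A K (by rw [hy, map_pow])⟩
  · rintro ⟨z, rfl⟩
    exact ⟨algebraMap A K z, map_pow _ _ _⟩

section ValuationRing

variable {A : Type*} [CommRing A] [IsDomain A] [ValuationRing A] {p : ℕ} [Fact p.Prime]
  {l w : A}

theorem dvd_sub_one_of_one_add_mul_pow_eq_pow (h : (p : A) = l ^ (p - 1) * w) (hl0 : l ≠ 0)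
    {x y : A} (hy : 1 + x * l ^ p = y ^ p) : l ∣ y - 1 := by
  have hp : p.Prime := Fact.out
  obtain ⟨c, rfl⟩ : ∃ c, y = 1 + c := ⟨y - 1, by ring⟩
  rw [add_sub_cancel_left]
  rcases ValuationRing.dvd_total l c with hdvd | ⟨d, rfl⟩
  · exact hdvd
  by_cases hdu : IsUnit d
  · exact hdu.mul_right_dvd.mpr dvd_rfl
  obtain ⟨r, hr⟩ := exists_add_pow_prime_eq hp 1 c
  have key : c ^ p * (1 + d ^ (p - 1) * w * r - x * d ^ p) = 0 := by
    linear_combination -hr - hy - (c * r) * h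
      + (d ^ (p - 1) * w * r) * (pow_sub_one_mul hp.ne_zero c).symm
  have hd0 : residue A d = 0 := (residue_eq_zero_iff d).mpr ((mem_maximalIdeal d).mpr hdu)
  have hc0 : c ^ p ≠ 0 := pow_ne_zero p (left_ne_zero_of_mul hl0)
  have := congrArg (residue A) ((mul_eq_zero.mp key).resolve_left hc0)
  simp [hd0, hp.ne_zero, Nat.sub_ne_zero_of_lt hp.one_lt] at this

theorem exists_residue_eq_pow_sub_of_one_add_mul_pow_eq_pow (h : (p : A) = l ^ (p - 1) * w)
    (hl0 : l ≠ 0) (hl : residue A l = 0) (hw : residue A w = -1) {x y : A}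
    (hy : 1 + x * l ^ p = y ^ p) : ∃ a : ResidueField A, residue A x = a ^ p - a := by
  obtain ⟨t, ht⟩ := dvd_sub_one_of_one_add_mul_pow_eq_pow h hl0 hy
  rw [eq_add_of_sub_eq' ht] at hy
  have hpow := congrArg (eval t) (one_add_C_mul_X_pow_eq h)
  simp only [eval_pow, eval_add, eval_one, eval_mul, eval_C, eval_X] at hpow
  have hx : x = (kummerArtinSchreierPoly p l w).eval t :=
    mul_right_cancel₀ (pow_ne_zero p hl0) (by linear_combination hy + hpow)
  refine ⟨residue A t, ?_⟩
  rw [hx, ← eval₂_at_apply, ← eval_map, map_kummerArtinSchreierPoly _ hl hw]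
  simp

theorem exists_algebraMap_one_add_mul_pow_eq_pow_iff [HenselianLocalRing A]
    [CharP (ResidueField A) p] (K : Type*) [Field K] [Algebra A K] [IsFractionRing A K]
    (h : (p : A) = l ^ (p - 1) * w) (hl0 : l ≠ 0) (hl : residue A l = 0)
    (hw : residue A w = -1) (x : A) :
    (∃ y : K, algebraMap A K (1 + x * l ^ p) = y ^ p) ↔
      ∃ a : ResidueField A, residue A x = a ^ p - a := by
  rw [exists_algebraMap_eq_pow_iff (Fact.out : p.Prime).ne_zero]
  exact ⟨fun ⟨_, hy⟩ => exists_residue_eq_pow_sub_of_one_add_mul_pow_eq_pow h hl0 hl hw hy,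
    fun ⟨_, ha⟩ => exists_one_add_mul_pow_eq_pow h hl hw ha⟩

end ValuationRing

theorem exists_eq_pow_mul_iff_of_mul_eq {F : Type*} [Field F] {n : ℕ} {u v w z : F}
    (hu : u ≠ 0) (hv : v ≠ 0) (h : u * v = w * z ^ n) :
    (∃ y, w = y ^ n * v) ↔ ∃ y, u = y ^ n := by
  have hz : z ^ n ≠ 0 := right_ne_zero_of_mul (h ▸ mul_ne_zero hu hv)
  constructor
  · rintro ⟨y, rfl⟩
    refine ⟨y * z, mul_right_cancel₀ hv ?_⟩
    rw [h]
    ring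
  · rintro ⟨y, rfl⟩
    refine ⟨y / z, ?_⟩
    rw [div_pow, div_mul_eq_mul_div, eq_div_iff hz, h]

theorem associated_pow_of_associated_pow_sub_one {A : Type*} [CommRing A] [IsDomain A]
    [IsDiscreteValuationRing A] {l π : A} (hπ : Irreducible π) {n e f : ℕ} (hn : 1 < n)
    (hl : Associated (l ^ (n - 1)) (π ^ e)) (hf : (n - 1) * f = n * e) :
    Associated (l ^ n) (π ^ f) := by
  have hl0 : l ≠ 0 := by
    rintro rfl
    rw [zero_pow (by omega)] at hl
    exact pow_ne_zero e hπ.ne_zero ((associated_zero_iff_eq_zero _).mp hl.symm)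
  obtain ⟨m, hm⟩ := IsDiscreteValuationRing.associated_pow_irreducible hl0 hπ
  have hme : Associated (π ^ (m * (n - 1))) (π ^ e) :=
    pow_mul π m (n - 1) ▸ hm.pow_pow.symm.trans hl
  have hme' : m * (n - 1) = e :=
    le_antisymm ((pow_dvd_pow_iff hπ.ne_zero hπ.not_isUnit).mp hme.dvd)
      ((pow_dvd_pow_iff hπ.ne_zero hπ.not_isUnit).mp hme.symm.dvd)
  have hfm : f = m * n := by
    apply Nat.eq_of_mul_eq_mul_left (show 0 < n - 1 by omega)
    rw [hf, ← hme']
    ring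
  rw [hfm, pow_mul]
  exact hm.pow_pow

theorem statement_6_general
    (p : ℕ) [Fact p.Prime]
    (A : Type) [CommRing A] [IsDomain A] [IsDiscreteValuationRing A] [HenselianLocalRing A]
    (K : Type) [Field K] [Algebra A K] [IsFractionRing A K]
    [CharP (IsLocalRing.ResidueField A) p]
    (ζ : A) (hζ : IsPrimitiveRoot ζ p)
    (π : A) (hπ : Irreducible π) (e f : ℕ)
    (he : Associated ((p : A)) (π ^ e)) (hf : (p - 1) * f = p * e) :
    (∀ x : A,
        (∃ y : K, algebraMap A K (1 + x * (ζ - 1) ^ p) = y ^ p) ↔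
          ∃ a : IsLocalRing.ResidueField A,
            IsLocalRing.residue A x = a ^ p - a)
      ∧ (∀ x x' : A,
          (∃ y : K, algebraMap A K (1 + x * (ζ - 1) ^ p)
              = y ^ p * algebraMap A K (1 + x' * (ζ - 1) ^ p)) ↔
            ∃ a : IsLocalRing.ResidueField A,
              IsLocalRing.residue A x - IsLocalRing.residue A x' = a ^ p - a)
      ∧ (∀ x x' : A, ∃ y : K,
          algebraMap A K ((1 + x * (ζ - 1) ^ p) * (1 + x' * (ζ - 1) ^ p))
            = y ^ p * algebraMap A K (1 + (x + x') * (ζ - 1) ^ p))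
      ∧ (∀ x : A, ∃ u : A, u - 1 ∈ (IsLocalRing.maximalIdeal A) ^ f ∧
          ∃ y : K, algebraMap A K (1 + x * (ζ - 1) ^ p) = y ^ p * algebraMap A K u)
      ∧ (∀ u : A, u - 1 ∈ (IsLocalRing.maximalIdeal A) ^ f →
          ∃ x : A, ∃ y : K,
            algebraMap A K u = y ^ p * algebraMap A K (1 + x * (ζ - 1) ^ p)) := by
  have hp : p.Prime := Fact.out
  have hl : residue A (ζ - 1) = 0 := residue_sub_one_eq_zero_of_pow_eq_one hζ.pow_eq_one
  have hl0 : ζ - 1 ≠ 0 := sub_ne_zero.mpr (hζ.ne_one hp.one_lt)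
  obtain ⟨w, hpw, hw⟩ := hζ.exists_natCast_eq_sub_one_pow_mul
  have hwu : IsUnit w := (residue_ne_zero_iff_isUnit w).mp (by simp [hw])
  have kernel := exists_algebraMap_one_add_mul_pow_eq_pow_iff K hpw hl0 hl hw
  have hmul := exists_one_add_mul_pow_mul_eq hpw hl hw
  have hne (x : A) : algebraMap A K (1 + x * (ζ - 1) ^ p) ≠ 0 :=
    ((isUnit_one_add_mul_pow hl x).map (algebraMap A K)).ne_zero
  have hm : (maximalIdeal A) ^ f = Ideal.span {(ζ - 1) ^ p} := by
    rw [hπ.maximalIdeal_eq, Ideal.span_singleton_pow, Ideal.span_singleton_eq_span_singleton]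
    exact (associated_pow_of_associated_pow_sub_one hπ hp.one_lt
      (Associated.trans ⟨hwu.unit, hpw.symm⟩ he) hf).symm
  refine ⟨kernel, fun x x' => ?_, fun x x' => ?_, fun x => ?_, fun u hu => ?_⟩
  · obtain ⟨z, hz⟩ := hmul (x - x') x'
    rw [sub_add_cancel] at hz
    rw [exists_eq_pow_mul_iff_of_mul_eq (hne _) (hne _)
      (by rw [← map_mul, hz, map_mul, map_pow]), kernel, map_sub]
  · obtain ⟨z, hz⟩ := hmul x x'
    exact ⟨algebraMap A K z, by rw [hz, map_mul, map_pow, mul_comm]⟩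
  · exact ⟨_, hm ▸ Ideal.mem_span_singleton'.mpr ⟨x, (add_sub_cancel_left _ _).symm⟩, 1,
      by rw [one_pow, one_mul]⟩
  · obtain ⟨x, hx⟩ := Ideal.mem_span_singleton'.mp (hm ▸ hu)
    exact ⟨x, 1, by rw [one_pow, one_mul, eq_add_of_sub_eq' hx.symm]⟩

theorem statement_6
    (p : ℕ) [Fact p.Prime]
    (A : Type) [CommRing A] [IsDomain A] [IsDiscreteValuationRing A] [HenselianLocalRing A]
    (K : Type) [Field K] [Algebra A K] [IsFractionRing A K] [CharZero K]
    [CharP (IsLocalRing.ResidueField A) p]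
    (ζ : A) (hζ : IsPrimitiveRoot ζ p)
    (π : A) (hπ : Irreducible π) (e f : ℕ)
    (he : Associated ((p : A)) (π ^ e)) (hf : (p - 1) * f = p * e) :
    (∀ x : A,
        (∃ y : K, algebraMap A K (1 + x * (ζ - 1) ^ p) = y ^ p) ↔
          ∃ a : IsLocalRing.ResidueField A,
            IsLocalRing.residue A x = a ^ p - a)
      ∧ (∀ x x' : A,
          (∃ y : K, algebraMap A K (1 + x * (ζ - 1) ^ p)
              = y ^ p * algebraMap A K (1 + x' * (ζ - 1) ^ p)) ↔
            ∃ a : IsLocalRing.ResidueField A,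
              IsLocalRing.residue A x - IsLocalRing.residue A x' = a ^ p - a)
      ∧ (∀ x x' : A, ∃ y : K,
          algebraMap A K ((1 + x * (ζ - 1) ^ p) * (1 + x' * (ζ - 1) ^ p))
            = y ^ p * algebraMap A K (1 + (x + x') * (ζ - 1) ^ p))
      ∧ (∀ x : A, ∃ u : A, u - 1 ∈ (IsLocalRing.maximalIdeal A) ^ f ∧
          ∃ y : K, algebraMap A K (1 + x * (ζ - 1) ^ p) = y ^ p * algebraMap A K u)
      ∧ (∀ u : A, u - 1 ∈ (IsLocalRing.maximalIdeal A) ^ f →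
          ∃ x : A, ∃ y : K,
            algebraMap A K u = y ^ p * algebraMap A K (1 + x * (ζ - 1) ^ p)) :=
  statement_6_general p A K ζ hζ π hπ e f he hf
end
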